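/- There exist ε > 0 and R₀ > 1/ε¹⁰ such that for all R > R₀: for every w ∈ K⁺ and every n ≥ 1, |xₙ| ≤ (3/2)·Mₙ₋₁, where Hⁿ(w) = (xₙ,yₙ,zₙ) and Mₙ = max{R, 2|azₙ|, |xₙ|^{3/2}, (1/ε)|yₙ|^{3/2}}. -/

import Mathlib

open Complex Filter Topology

/-! Since `xₙ₊₁ = xₙyₙ + azₙ`, a point whose orbit never enters `V⁻` satisfies
`|xₙ₊₁| ≤ |xₙyₙ| + |azₙ| ≤ Mₙ + Mₙ/2`, for every choice of `ε` and `R`. -/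

/-- The quadratic automorphism `H(x,y,z) = (xy + az, x² + by, x)` of `ℂ³`. -/
noncomputable def H (a b : ℂ) (w : ℂ × ℂ × ℂ) : ℂ × ℂ × ℂ :=
  (w.1 * w.2.1 + a * w.2.2, w.1 ^ 2 + b * w.2.1, w.1)

/-- `V⁻ = {(x,y,z) : |xy| > max{R, 2|az|, |x|^{3/2}, (1/ε)|y|^{3/2}}}`. -/
noncomputable def Vminus (a : ℂ) (ε R : ℝ) : Set (ℂ × ℂ × ℂ) :=
  {w | ‖w.1 * w.2.1‖ >
    max R (max (2 * ‖a * w.2.2‖)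
      (max ((‖w.1‖) ^ ((3 : ℝ) / 2))
        ((1 / ε) * (‖w.2.1‖) ^ ((3 : ℝ) / 2))))}

/-- `U⁺ = ⋃_{n≥0} H⁻ⁿ(V⁻)`, i.e. the points whose forward orbit meets `V⁻`. -/
noncomputable def Uplus (a b : ℂ) (ε R : ℝ) : Set (ℂ × ℂ × ℂ) :=
  ⋃ n : ℕ, (H a b)^[n] ⁻¹' Vminus a ε R

/-- `K⁺ = ℂ³ \ U⁺`. -/
noncomputable def Kplus (a b : ℂ) (ε R : ℝ) : Set (ℂ × ℂ × ℂ) :=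
  (Uplus a b ε R)ᶜ

/-- `Mₙ = max{R, 2|azₙ|, |xₙ|^{3/2}, (1/ε)|yₙ|^{3/2}}` where `Hⁿ(w) = (xₙ,yₙ,zₙ)`. -/
noncomputable def Mseq (a b : ℂ) (ε R : ℝ) (w : ℂ × ℂ × ℂ) (n : ℕ) : ℝ :=
  max R (max (2 * ‖a * ((H a b)^[n] w).2.2‖)
    (max (‖((H a b)^[n] w).1‖ ^ ((3 : ℝ) / 2))
      ((1 / ε) * ‖((H a b)^[n] w).2.1‖ ^ ((3 : ℝ) / 2))))

section

variable {a b : ℂ} {ε R : ℝ} {w : ℂ × ℂ × ℂ}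

theorem H_fst (w : ℂ × ℂ × ℂ) : (H a b w).1 = w.1 * w.2.1 + a * w.2.2 := rfl

theorem iterate_notMem_Vminus_of_mem_Kplus (hw : w ∈ Kplus a b ε R) (n : ℕ) :
    (H a b)^[n] w ∉ Vminus a ε R :=
  fun h => hw (Set.mem_iUnion.2 ⟨n, h⟩)

theorem norm_fst_mul_snd_iterate_le_Mseq (hw : w ∈ Kplus a b ε R) (n : ℕ) :
    ‖((H a b)^[n] w).1 * ((H a b)^[n] w).2.1‖ ≤ Mseq a b ε R w n :=
  not_lt.1 (iterate_notMem_Vminus_of_mem_Kplus hw n)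

theorem two_mul_norm_thd_iterate_le_Mseq (w : ℂ × ℂ × ℂ) (n : ℕ) :
    2 * ‖a * ((H a b)^[n] w).2.2‖ ≤ Mseq a b ε R w n :=
  (le_max_left _ _).trans (le_max_right _ _)

theorem norm_fst_iterate_succ_le_Mseq (hw : w ∈ Kplus a b ε R) (n : ℕ) :
    ‖((H a b)^[n + 1] w).1‖ ≤ 3 / 2 * Mseq a b ε R w n := by
  set p := (H a b)^[n] w
  have hxy : ‖p.1 * p.2.1‖ ≤ Mseq a b ε R w n := norm_fst_mul_snd_iterate_le_Mseq hw n
  have haz : 2 * ‖a * p.2.2‖ ≤ Mseq a b ε R w n := two_mul_norm_thd_iterate_le_Mseq w n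
  rw [Function.iterate_succ_apply', H_fst]
  linarith [norm_add_le (p.1 * p.2.1) (a * p.2.2)]

end

theorem stmt10_general (a b : ℂ) :
    ∃ ε > (0 : ℝ), ∃ R₀ > 1 / ε ^ 10, ∀ R > R₀, ∀ w ∈ Kplus a b ε R,
      ∀ n : ℕ, ‖((H a b)^[n + 1] w).1‖ ≤
        3 / 2 * Mseq a b ε R w n :=
  ⟨1, one_pos, 2, by norm_num, fun _ _ _ hw n => norm_fst_iterate_succ_le_Mseq hw n⟩

/-- there exist `ε > 0` and `R₀ > 1/ε¹⁰` such that for all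
`R > R₀`: for every `w ∈ K⁺` and every `n ≥ 1`, `|xₙ| ≤ (3/2)·Mₙ₋₁`. -/
theorem stmt10 (a b : ℂ) (ha : a ≠ 0) (hb : b ≠ 0) :
    ∃ ε > (0 : ℝ), ∃ R₀ > 1 / ε ^ 10, ∀ R > R₀, ∀ w ∈ Kplus a b ε R,
      ∀ n : ℕ, ‖((H a b)^[n + 1] w).1‖ ≤
        3 / 2 * Mseq a b ε R w n :=
  stmt10_general a b
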